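/- arXiv:2104.10358 — 7 statements merged into one kernel-verified Lean document; each statement's English description precedes it below -/
import Mathlib

section
/- Every non-minimal element of a well-founded distributive join-semilattice has a canonical decomposition: it can be written as a finite supremum of pairwise incomparable join-irreducible elements, and this representation is unique up to permutation of the components. -/
/-!
By distributivity, sup-irreducible elements are prime: `a ≤ y ⊔ z` implies `a ≤ y` or `a ≤ z`.
Well-foundedness writes every element as the join of finitely many sup-irreducibles, and keeping
only the maximal ones yields an antichain with the same join. If `T` and `U` are two such
antichains, every `a ∈ T` lies below some `u ∈ U` by primality, which in turn lies below some
`a' ∈ T`; as `T` is an antichain, `a = a' = u`, so `T ⊆ U`, and symmetrically.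
-/

open Finset

def IsSupDistrib (S : Type*) [SemilatticeSup S] : Prop :=
  ∀ x y z : S, x ≤ y ⊔ z → ∃ y' z', y' ≤ y ∧ z' ≤ z ∧ x = y' ⊔ z'

section

variable {S : Type*} [SemilatticeSup S]

namespace IsSupDistrib

theorem isBot_of_isMin (hS : IsSupDistrib S) {b : S} (hb : IsMin b) : IsBot b := by
  intro c
  obtain ⟨y', z', -, hz, hb'⟩ := hS b b c le_sup_left
  exact (hb (hb' ▸ le_sup_right)).trans hz

theorem supPrime_of_supIrred (hS : IsSupDistrib S) {a : S} (ha : SupIrred a) : SupPrime a := by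
  refine ⟨ha.not_isMin, fun b c hle => ?_⟩
  obtain ⟨y', z', hy, hz, he⟩ := hS a b c hle
  rcases ha.2 he.symm with h | h
  · exact Or.inl (h ▸ hy)
  · exact Or.inr (h ▸ hz)

theorem exists_finset_supIrred_isLUB [WellFoundedLT S] (hS : IsSupDistrib S) (x : S) :
    ∃ U : Finset S, (∀ a ∈ U, SupIrred a) ∧ IsLUB (U : Set S) x := by
  classical
  induction x using WellFoundedLT.induction with
  | _ x ih =>
    by_cases hirr : SupIrred x
    · exact ⟨{x}, by simpa using hirr, by simp [isLUB_singleton]⟩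
    rcases not_supIrred.1 hirr with hmin | ⟨b, c, rfl, hb, hc⟩
    · exact ⟨∅, by simp, by simp [hS.isBot_of_isMin hmin]⟩
    obtain ⟨Ub, hUb, hb⟩ := ih b hb
    obtain ⟨Uc, hUc, hc⟩ := ih c hc
    exact ⟨Ub ∪ Uc, fun a ha => (mem_union.1 ha).elim (hUb a) (hUc a),
      by simpa using hb.union hc⟩

end IsSupDistrib

theorem SupPrime.exists_le_of_le_isLUB {a x : S} (ha : SupPrime a) {U : Finset S}
    (hU : IsLUB (U : Set S) x) (hax : a ≤ x) : ∃ u ∈ U, a ≤ u := by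
  rcases U.eq_empty_or_nonempty with rfl | hne
  · exact absurd (fun b _ => hax.trans (isLUB_empty_iff.1 (by simpa using hU) b)) ha.not_isMin
  rw [hU.unique (isLUB_sup' hne)] at hax
  exact sup'_induction (p := fun y => a ≤ y → ∃ u ∈ U, a ≤ u) hne id
    (fun _ h₁ _ h₂ hle => (ha.le_sup.1 hle).elim h₁ h₂) (fun u hu h => ⟨u, hu, h⟩) hax

theorem Finset.exists_isAntichain_subset_isLUB {U : Finset S} {x : S} (hU : IsLUB (U : Set S) x) :
    ∃ T ⊆ U, IsAntichain (· ≤ ·) (T : Set S) ∧ IsLUB (T : Set S) x := by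
  classical
  refine ⟨U.filter (Maximal (· ∈ U)), filter_subset _ _, ?_, ?_⟩
  · exact (setOfPred_maximal_antichain _).subset fun a ha => (mem_filter.1 ha).2
  · refine (isLUB_congr (Set.Subset.antisymm ?_ ?_)).1 hU
    · exact upperBounds_mono_set fun a ha => (mem_filter.1 ha).1
    · intro y hy u hu
      obtain ⟨m, hum, hm⟩ := U.exists_le_maximal hu
      exact hum.trans (hy (by simpa using ⟨hm.1, hm⟩))

theorem Finset.subset_of_isLUB_of_supPrime {T U : Finset S} {x : S}
    (hT : ∀ a ∈ T, SupPrime a) (hU : ∀ u ∈ U, SupPrime u)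
    (hTanti : IsAntichain (· ≤ ·) (T : Set S))
    (hTx : IsLUB (T : Set S) x) (hUx : IsLUB (U : Set S) x) : T ⊆ U := by
  intro a ha
  obtain ⟨u, hu, hau⟩ := (hT a ha).exists_le_of_le_isLUB hUx (hTx.1 ha)
  obtain ⟨a', ha', hua'⟩ := (hU u hu).exists_le_of_le_isLUB hTx (hUx.1 hu)
  obtain rfl : a = a' := hTanti.eq ha ha' (hau.trans hua')
  exact le_antisymm hau hua' ▸ hu

end

/-- Every non-minimal element of a well-founded distributive join-semilattice has a
canonical decomposition: it is the supremum of a (unique) finite nonempty set of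
pairwise incomparable join-irreducible elements. -/
theorem stmt1 {S : Type*} [SemilatticeSup S]
    (hwf : WellFounded ((· < ·) : S → S → Prop))
    (hdist : ∀ x y z : S, x ≤ y ⊔ z → ∃ y' z', y' ≤ y ∧ z' ≤ z ∧ x = y' ⊔ z')
    (x : S) (hx : ¬ IsMin x) :
    ∃! T : Finset S, T.Nonempty ∧ (∀ a ∈ T, SupIrred a) ∧
      (T : Set S).Pairwise (fun a b => ¬ a ≤ b ∧ ¬ b ≤ a) ∧ IsLUB (T : Set S) x := by
  have hS : IsSupDistrib S := hdist
  have : WellFoundedLT S := ⟨hwf⟩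
  obtain ⟨U, hUirr, hUx⟩ := hS.exists_finset_supIrred_isLUB x
  obtain ⟨T, hTU, hTanti, hTx⟩ := exists_isAntichain_subset_isLUB hUx
  have hTne : T.Nonempty := nonempty_iff_ne_empty.2 fun h =>
    hx (isLUB_empty_iff.1 (by simpa [h] using hTx)).isMin
  refine ⟨T, ⟨hTne, fun a ha => hUirr a (hTU ha),
    fun a ha b hb hab => ⟨hTanti ha hb hab, hTanti hb ha hab.symm⟩, hTx⟩, ?_⟩
  rintro V ⟨-, hVirr, hVanti, hVx⟩
  have hVprime : ∀ a ∈ V, SupPrime a := fun a ha => hS.supPrime_of_supIrred (hVirr a ha)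
  have hTprime : ∀ a ∈ T, SupPrime a := fun a ha => hS.supPrime_of_supIrred (hUirr a (hTU ha))
  exact Subset.antisymm
    (subset_of_isLUB_of_supPrime hVprime hTprime (hVanti.mono' fun _ _ h => h.1) hVx hTx)
    (subset_of_isLUB_of_supPrime hTprime hVprime hTanti hTx hVx)
end

section
/- If the poset Q is a well quasi-order, then the quotient join-semilattice Q^⊔ of nonempty finite subsets of Q ordered by S ≤* R iff every element of S is below some element of R is also a well quasi-order (well founded with no infinite antichains). -/
/-!
A well quasi-order is the same as a relation in which every sequence has a good pair
`f m ≤ f n` with `m < n`. By Higman's lemma the lists over `Q` are well quasi-ordered by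
`List.SublistForall₂ (· ≤ ·)`, and a good pair of lists `S.toList, R.toList` is already a good
pair `S ≤* R` of finite sets.
-/

/-- A preorder-like relation `r` is a well quasi-order: there is no infinite strictly
descending chain and no infinite antichain. -/
def IsWqo {α : Type*} (r : α → α → Prop) : Prop :=
  (¬ ∃ f : ℕ → α, ∀ n : ℕ, r (f (n + 1)) (f n) ∧ ¬ r (f n) (f (n + 1))) ∧
  (¬ ∃ f : ℕ → α, ∀ m n : ℕ, m ≠ n → ¬ r (f m) (f n))

/-- The preorder `≤*` on nonempty finite subsets of a preorder `Q`. -/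
def leStar {Q : Type*} [Preorder Q] (S R : Finset Q) : Prop :=
  ∀ s ∈ S, ∃ r ∈ R, s ≤ r

theorem List.SublistForall₂.exists_of_mem {α β : Type*} {r : α → β → Prop}
    {l₁ : List α} {l₂ : List β} (h : List.SublistForall₂ r l₁ l₂) :
    ∀ a ∈ l₁, ∃ b ∈ l₂, r a b := by
  induction h with
  | nil => simp
  | cons hr _ ih =>
    rintro a (_ | ⟨_, ha⟩)
    · exact ⟨_, List.mem_cons_self, hr⟩
    · obtain ⟨b, hb, hab⟩ := ih a ha
      exact ⟨b, List.mem_cons_of_mem _ hb, hab⟩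
  | cons_right _ ih =>
    intro a ha
    obtain ⟨b, hb, hab⟩ := ih a ha
    exact ⟨b, List.mem_cons_of_mem _ hb, hab⟩

section IsWqo

variable {α : Type*} {r : α → α → Prop}

theorem WellQuasiOrdered.of_isWqo (h : IsWqo r) : WellQuasiOrdered r := by
  intro f
  by_contra! hbad
  obtain ⟨g, hdesc | hanti⟩ := exists_increasing_or_nonincreasing_subseq' (fun a b => r b a) f
  · exact h.1 ⟨f ∘ g, fun n => ⟨hdesc n,
      hbad (g n) (g (n + 1)) (g.strictMono n.lt_succ_self)⟩⟩
  · refine h.2 ⟨f ∘ g, fun m n hmn => ?_⟩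
    rcases hmn.lt_or_gt with hlt | hlt
    · exact hbad (g m) (g n) (g.strictMono hlt)
    · exact hanti n m hlt

theorem WellQuasiOrdered.isWqo [IsPreorder α r] (h : WellQuasiOrdered r) : IsWqo r := by
  refine ⟨fun ⟨f, hf⟩ => ?_, fun ⟨f, hf⟩ => ?_⟩
  · exact (wellFounded_iff_isEmpty_descending_chain.1 h.wellFounded).elim ⟨f, hf⟩
  · obtain ⟨m, n, hmn, hr⟩ := h f
    exact hf m n hmn.ne hr

end IsWqo

section LeStar

variable {Q : Type*} [Preorder Q]

theorem leStar_refl (S : Finset Q) : leStar S S :=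
  fun s hs => ⟨s, hs, le_rfl⟩

theorem leStar_trans {S R T : Finset Q} (hSR : leStar S R) (hRT : leStar R T) : leStar S T := by
  intro s hs
  obtain ⟨r, hr, hsr⟩ := hSR s hs
  obtain ⟨t, ht, hrt⟩ := hRT r hr
  exact ⟨t, ht, hsr.trans hrt⟩

theorem leStar_of_sublistForall₂_toList {S R : Finset Q}
    (h : List.SublistForall₂ (· ≤ ·) S.toList R.toList) : leStar S R := by
  intro s hs
  obtain ⟨r, hr, hsr⟩ := h.exists_of_mem s (Finset.mem_toList.2 hs)
  exact ⟨r, Finset.mem_toList.1 hr, hsr⟩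

theorem WellQuasiOrdered.leStar (h : WellQuasiOrdered ((· ≤ ·) : Q → Q → Prop)) :
    WellQuasiOrdered (leStar : Finset Q → Finset Q → Prop) := by
  have higman : WellQuasiOrdered (List.SublistForall₂ ((· ≤ ·) : Q → Q → Prop)) := by
    rw [← Set.partiallyWellOrderedOn_univ_iff] at h ⊢
    simpa using h.partiallyWellOrderedOn_sublistForall₂ (· ≤ ·)
  intro f
  obtain ⟨m, n, hmn, hmn'⟩ := higman fun n => (f n).toList
  exact ⟨m, n, hmn, leStar_of_sublistForall₂_toList hmn'⟩

end LeStar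

/-- If `Q` is a well quasi-order, then `Q^⊔` (nonempty finite subsets of `Q` under `≤*`)
is a well quasi-order. -/
theorem stmt4 {Q : Type*} [Preorder Q]
    (hQ : IsWqo ((· ≤ ·) : Q → Q → Prop)) :
    IsWqo (fun A B : {S : Finset Q // S.Nonempty} => leStar A.1 B.1) := by
  have : IsPreorder {S : Finset Q // S.Nonempty} (fun A B => leStar A.1 B.1) :=
    { refl := fun A => leStar_refl A.1
      trans := fun _ _ _ => leStar_trans }
  have hwqo : WellQuasiOrdered (fun A B : {S : Finset Q // S.Nonempty} => leStar A.1 B.1) :=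
    fun f => (WellQuasiOrdered.of_isWqo hQ).leStar (Subtype.val ∘ f)
  exact hwqo.isWqo
end

section
/- In the join-semilattice of finite Q-labeled forests under the h-preorder, with join given by disjoint union, an element is join-irreducible if and only if it is h-equivalent to a Q-labeled tree. -/
/-!
A monotone map sends a tree into a single component of `G ⊔ H`, since every image lies above
the image of the root; hence trees, and everything h-equivalent to one, are join-irreducible.
Conversely, a forest `F` that is not a tree splits as `A ⊔ B` with `A` the cone of one of its
roots and `B` the rest. Both lie below `F`, so irreducibility makes `F` h-equivalent to a proper
subforest, which is again join-irreducible; induction on the size of `F` ends at a tree.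
-/

/-- A finite forest realized as a finite set of nonempty strings over `ℕ`,
closed under nonempty prefixes. -/
def IsForest (F : Finset (List ℕ)) : Prop :=
  (∀ s ∈ F, s ≠ []) ∧ ∀ s ∈ F, ∀ t : List ℕ, t <+: s → t ≠ [] → t ∈ F

/-- A tree is a forest with a least element (root). -/
def IsTree (T : Finset (List ℕ)) : Prop :=
  IsForest T ∧ ∃ r ∈ T, ∀ s ∈ T, r <+: s

/-- The h-preorder on `Q`-labeled forests. -/
def hle {Q : Type*} [Preorder Q] (F : Finset (List ℕ)) (c : List ℕ → Q)
    (G : Finset (List ℕ)) (d : List ℕ → Q) : Prop :=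
  ∃ f : List ℕ → List ℕ, (∀ s ∈ F, f s ∈ G) ∧
    (∀ s ∈ F, ∀ t ∈ F, s <+: t → f s <+: f t) ∧
    (∀ s ∈ F, c s ≤ d (f s))

/-- Disjoint union of two forests (tagging with `0` resp. `1`). -/
def dunion (F G : Finset (List ℕ)) : Finset (List ℕ) :=
  F.image (List.cons 0) ∪ G.image (List.cons 1)

/-- Label function for the disjoint union. -/
def dlabel {Q : Type*} (c d : List ℕ → Q) : List ℕ → Q :=
  fun s => match s with
  | 0 :: t => c t
  | 1 :: t => d t
  | _ => c []

theorem List.IsPrefix.head?_eq {α : Type*} {s t : List α} (h : s <+: t) (hs : s ≠ []) :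
    s.head? = t.head? := by
  obtain ⟨u, rfl⟩ := h
  cases s with
  | nil => exact absurd rfl hs
  | cons a s => rfl

section

variable {Q : Type*} [Preorder Q]

theorem hle_refl (F : Finset (List ℕ)) (c : List ℕ → Q) : hle F c F c :=
  ⟨id, fun _ hs => hs, fun _ _ _ _ h => h, fun _ _ => le_rfl⟩

theorem hle_trans {F G H : Finset (List ℕ)} {c d e : List ℕ → Q}
    (h₁ : hle F c G d) (h₂ : hle G d H e) : hle F c H e := by
  obtain ⟨f, hfG, hf_mono, hf_label⟩ := h₁
  obtain ⟨g, hgH, hg_mono, hg_label⟩ := h₂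
  exact ⟨g ∘ f, fun s hs => hgH _ (hfG s hs),
    fun s hs t ht hst => hg_mono _ (hfG s hs) _ (hfG t ht) (hf_mono s hs t ht hst),
    fun s hs => (hf_label s hs).trans (hg_label _ (hfG s hs))⟩

theorem hle_of_subset {F G : Finset (List ℕ)} (c : List ℕ → Q) (h : F ⊆ G) : hle F c G c :=
  ⟨id, fun _ hs => h hs, fun _ _ _ _ h => h, fun _ _ => le_rfl⟩

theorem hle_of_hle_image_cons {F K : Finset (List ℕ)} {c x k : List ℕ → Q} {i : ℕ}
    (h : hle F c (K.image (List.cons i)) x) (hx : ∀ v, x (i :: v) ≤ k v) : hle F c K k := by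
  obtain ⟨f, hfK, hf_mono, hf_label⟩ := h
  have hf : ∀ s ∈ F, f s = i :: (f s).tail ∧ (f s).tail ∈ K := by
    intro s hs
    obtain ⟨v, hv, hfs⟩ := Finset.mem_image.mp (hfK s hs)
    simp [← hfs, hv]
  refine ⟨fun s => (f s).tail, fun s hs => (hf s hs).2, fun s hs t ht hst => ?_, fun s hs => ?_⟩
  · have := hf_mono s hs t ht hst
    rw [(hf s hs).1, (hf t ht).1, List.cons_prefix_cons] at this
    exact this.2
  · exact (hf_label s hs).trans ((hf s hs).1 ▸ hx _)

theorem hle_dunion_filter {F : Finset (List ℕ)} (c : List ℕ → Q) (p : List ℕ → Prop)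
    [DecidablePred p] (hp : ∀ s ∈ F, ∀ t ∈ F, s <+: t → (p s ↔ p t)) :
    hle F c (dunion (F.filter p) (F.filter (¬p ·))) (dlabel c c) := by
  refine ⟨fun s => if p s then 0 :: s else 1 :: s, fun s hs => ?_, fun s hs t ht hst => ?_,
    fun s _ => ?_⟩
  · by_cases h : p s <;> simp [dunion, h, hs]
  · have := hp s hs t ht hst
    dsimp only
    split_ifs <;> simp_all
  · by_cases h : p s <;> simp [h, dlabel]

end

theorem IsForest.filter {F : Finset (List ℕ)} (hF : IsForest F) (p : List ℕ → Prop)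
    [DecidablePred p] (hp : ∀ s t, t <+: s → t ≠ [] → p s → p t) : IsForest (F.filter p) := by
  refine ⟨fun s hs => hF.1 s (Finset.mem_of_mem_filter s hs), fun s hs t hts ht => ?_⟩
  rw [Finset.mem_filter] at hs ⊢
  exact ⟨hF.2 s hs.1 t hts ht, hp s t hts ht hs.2⟩

theorem IsForest.exists_singleton_mem {F : Finset (List ℕ)} (hF : IsForest F)
    (hne : F.Nonempty) : ∃ a, [a] ∈ F := by
  obtain ⟨s, hs⟩ := hne
  cases s with
  | nil => exact absurd rfl (hF.1 _ hs)
  | cons a s => exact ⟨a, hF.2 _ hs [a] ⟨s, rfl⟩ (List.cons_ne_nil a [])⟩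

theorem mem_dunion {G H : Finset (List ℕ)} {s : List ℕ} :
    s ∈ dunion G H ↔ (∃ u ∈ G, 0 :: u = s) ∨ (∃ u ∈ H, 1 :: u = s) := by
  simp [dunion]

def HJoinIrreducible {Q : Type*} [Preorder Q] (F : Finset (List ℕ)) (c : List ℕ → Q) : Prop :=
  ∀ (G H : Finset (List ℕ)) (d e : List ℕ → Q), IsForest G → IsForest H →
    hle F c (dunion G H) (dlabel d e) → hle F c G d ∨ hle F c H e

namespace HJoinIrreducible

variable {Q : Type*} [Preorder Q]

theorem of_hle_of_hle {F G : Finset (List ℕ)} {c d : List ℕ → Q} (hirr : HJoinIrreducible F c)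
    (hGF : hle G d F c) (hFG : hle F c G d) : HJoinIrreducible G d :=
  fun A B a b hA hB h =>
    (hirr A B a b hA hB (hle_trans hFG h)).imp (hle_trans hGF) (hle_trans hGF)

theorem of_root {T : Finset (List ℕ)} (t : List ℕ → Q) {r : List ℕ} (hr : r ∈ T)
    (hroot : ∀ s ∈ T, r <+: s) : HJoinIrreducible T t := by
  intro G H d e _ _ h
  obtain ⟨f, hf_mem, hf_mono, hf_label⟩ := h
  have hfr : f r ≠ [] := fun h => by simpa [h, dunion] using hf_mem r hr
  have hhead : ∀ s ∈ T, (f s).head? = (f r).head? := fun s hs =>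
    ((hf_mono r hr s hs (hroot s hs)).head?_eq hfr).symm
  rcases mem_dunion.mp (hf_mem r hr) with ⟨u, -, hu⟩ | ⟨u, -, hu⟩
  · refine .inl (hle_of_hle_image_cons (i := 0) ⟨f, fun s hs => ?_, hf_mono, hf_label⟩
      fun _ => le_rfl)
    rcases mem_dunion.mp (hf_mem s hs) with ⟨v, hv, hfs⟩ | ⟨v, -, hfs⟩
    · exact hfs ▸ Finset.mem_image_of_mem _ hv
    · simpa [← hfs, ← hu] using hhead s hs
  · refine .inr (hle_of_hle_image_cons (i := 1) ⟨f, fun s hs => ?_, hf_mono, hf_label⟩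
      fun _ => le_rfl)
    rcases mem_dunion.mp (hf_mem s hs) with ⟨v, -, hfs⟩ | ⟨v, hv, hfs⟩
    · simpa [← hfs, ← hu] using hhead s hs
    · exact hfs ▸ Finset.mem_image_of_mem _ hv

theorem exists_ssubset {F : Finset (List ℕ)} {c : List ℕ → Q} (hirr : HJoinIrreducible F c)
    (hF : IsForest F) {a : ℕ} {w : List ℕ} (ha : [a] ∈ F) (hw : w ∈ F) (hwa : ¬[a] <+: w) :
    ∃ K ⊂ F, IsForest K ∧ K.Nonempty ∧ hle F c K c := by
  have hcone : ∀ s t : List ℕ, s <+: t → s ≠ [] → ([a] <+: s ↔ [a] <+: t) := by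
    intro s t hst hs
    simp only [List.singleton_prefix_iff_head?_eq_some, hst.head?_eq hs]
  set A := F.filter ([a] <+: ·)
  set B := F.filter (¬[a] <+: ·)
  have hA : IsForest A := hF.filter _ fun s t hts ht => (hcone t s hts ht).mpr
  have hB : IsForest B := hF.filter _ fun s t hts ht => mt (hcone t s hts ht).mp
  have hsplit : hle F c (dunion A B) (dlabel c c) :=
    hle_dunion_filter c ([a] <+: ·) fun s hs t _ hst => hcone s t hst (hF.1 s hs)
  rcases hirr A B c c hA hB hsplit with hFA | hFB
  · exact ⟨A, Finset.filter_ssubset.mpr ⟨w, hw, hwa⟩, hA,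
      ⟨[a], Finset.mem_filter.mpr ⟨ha, List.prefix_refl _⟩⟩, hFA⟩
  · exact ⟨B, Finset.filter_ssubset.mpr ⟨[a], ha, by simp⟩, hB,
      ⟨w, Finset.mem_filter.mpr ⟨hw, hwa⟩⟩, hFB⟩

theorem exists_isTree_hequiv {F : Finset (List ℕ)} {c : List ℕ → Q}
    (hirr : HJoinIrreducible F c) (hF : IsForest F) (hne : F.Nonempty) :
    ∃ (T : Finset (List ℕ)) (t : List ℕ → Q), IsTree T ∧ hle F c T t ∧ hle T t F c := by
  induction F using Finset.strongInduction with
  | H F ih =>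
    obtain ⟨a, ha⟩ := hF.exists_singleton_mem hne
    by_cases hroot : ∀ s ∈ F, [a] <+: s
    · exact ⟨F, c, ⟨hF, [a], ha, hroot⟩, hle_refl F c, hle_refl F c⟩
    push Not at hroot
    obtain ⟨w, hw, hwa⟩ := hroot
    obtain ⟨K, hKF, hK, hKne, hFK⟩ := hirr.exists_ssubset hF ha hw hwa
    have hKF_le : hle K c F c := hle_of_subset c hKF.subset
    obtain ⟨T, t, hT, hKT, hTK⟩ := ih K hKF (hirr.of_hle_of_hle hKF_le hFK) hK hKne
    exact ⟨T, t, hT, hle_trans hFK hKT, hle_trans hTK hKF_le⟩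

end HJoinIrreducible

/-- In the semilattice of finite `Q`-labeled forests under the h-preorder with join
the disjoint union, a (nonempty) forest is join-irreducible iff it is h-equivalent
to a `Q`-labeled tree. -/
theorem stmt6 {Q : Type*} [Preorder Q] (F : Finset (List ℕ)) (c : List ℕ → Q)
    (hF : IsForest F) (hne : F.Nonempty) :
    (∀ (G H : Finset (List ℕ)) (d e : List ℕ → Q), IsForest G → IsForest H →
        hle F c (dunion G H) (dlabel d e) → hle F c G d ∨ hle F c H e)
    ↔ ∃ (T : Finset (List ℕ)) (t : List ℕ → Q),
        IsTree T ∧ hle F c T t ∧ hle T t F c :=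
  ⟨fun hirr => HJoinIrreducible.exists_isTree_hequiv hirr hF hne,
    fun ⟨_, t, ⟨_, _, hr, hroot⟩, hFT, hTF⟩ =>
      (HJoinIrreducible.of_root t hr hroot).of_hle_of_hle hFT hTF⟩
end

section
/- Let (C; ≤₀, ≤₁) be a compatible finite 2-preorder, and let A, B be disjoint ≤₁-downward-closed subsets of C. Then A and B are separated by a set belonging to the Boolean algebra generated by the ≤₀-upward-closed sets. -/
/-!
Take for the separating set the union of the `≡₀`-classes of the points of `A`. Each class
`{x | a ≤₀ x} ∩ {x | x ≤₀ a}` is the intersection of an up-set with the complement of another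
up-set, `{x | ¬ x ≤₀ a}`, and there are finitely many classes. The union contains `A`, and it
misses `B`: if `a ∈ A` and `x ∈ B` were `≡₀`-equivalent, compatibility would give `c ≤₁ a, x`,
which lies in `A ∩ B` because both sets are `≤₁`-down-closed.
-/

/-- Membership in the Boolean algebra generated by a family of sets. -/
inductive BoolGen {C : Type*} (G : Set C → Prop) : Set C → Prop
  | basic {s : Set C} : G s → BoolGen G s
  | compl {s : Set C} : BoolGen G s → BoolGen G sᶜ
  | union {s t : Set C} : BoolGen G s → BoolGen G t → BoolGen G (s ∪ t)
  | inter {s t : Set C} : BoolGen G s → BoolGen G t → BoolGen G (s ∩ t)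

namespace BoolGen

variable {C : Type*} {G : Set C → Prop}

theorem biUnion {ι : Type*} {t : Set ι} {f : ι → Set C} (ht : t.Finite)
    (hempty : BoolGen G ∅) (hf : ∀ i ∈ t, BoolGen G (f i)) : BoolGen G (⋃ i ∈ t, f i) := by
  induction t, ht using Set.Finite.induction_on with
  | empty => simpa using hempty
  | @insert a s _ _ ih =>
    rw [Set.biUnion_insert]
    exact (hf a (Set.mem_insert a s)).union (ih fun i hi => hf i (Set.mem_insert_of_mem a hi))

end BoolGen

section UpClosed

variable {C : Type*}

def IsUpClosed (r : C → C → Prop) (U : Set C) : Prop :=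
  ∀ x y, x ∈ U → r x y → y ∈ U

variable {r : C → C → Prop}

theorem isUpClosed_empty : IsUpClosed r ∅ := fun _ _ hx _ => hx.elim

theorem isUpClosed_setOf_rel (htrans : ∀ x y z, r x y → r y z → r x z) (a : C) :
    IsUpClosed r {x | r a x} :=
  fun x y hx hxy => htrans a x y hx hxy

theorem isUpClosed_setOf_not_rel (htrans : ∀ x y z, r x y → r y z → r x z) (a : C) :
    IsUpClosed r {x | ¬ r x a} :=
  fun x y hx hxy hya => hx (htrans x y a hxy hya)

theorem boolGen_setOf_rel_and_rel (htrans : ∀ x y z, r x y → r y z → r x z) (a : C) :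
    BoolGen (IsUpClosed r) {x | r a x ∧ r x a} := by
  have h : {x | r a x ∧ r x a} = {x | r a x} ∩ {x | ¬ r x a}ᶜ := by
    ext x
    simp
  rw [h]
  exact (BoolGen.basic (isUpClosed_setOf_rel htrans a)).inter
    (BoolGen.basic (isUpClosed_setOf_not_rel htrans a)).compl

end UpClosed

theorem stmt10_general {C : Type*} [Finite C] (le0 le1 : C → C → Prop)
    (h0refl : ∀ x, le0 x x) (h0trans : ∀ x y z, le0 x y → le0 y z → le0 x z)
    (hcompat : ∀ a b, le0 a b → le0 b a → ∃ c, le1 c a ∧ le1 c b)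
    (A B : Set C)
    (hA : ∀ x y, le1 x y → y ∈ A → x ∈ A)
    (hB : ∀ x y, le1 x y → y ∈ B → x ∈ B)
    (hdisj : A ∩ B = ∅) :
    ∃ S : Set C, BoolGen (fun U => ∀ x y, x ∈ U → le0 x y → y ∈ U) S ∧
      A ⊆ S ∧ S ∩ B = ∅ := by
  refine ⟨⋃ a ∈ A, {x | le0 a x ∧ le0 x a},
    BoolGen.biUnion A.toFinite (.basic isUpClosed_empty)
      fun a _ => boolGen_setOf_rel_and_rel h0trans a,
    fun a ha => Set.mem_biUnion ha ⟨h0refl a, h0refl a⟩, ?_⟩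
  rw [Set.eq_empty_iff_forall_notMem]
  rintro x ⟨hxS, hxB⟩
  obtain ⟨a, haA, hax, hxa⟩ := Set.mem_iUnion₂.mp hxS
  obtain ⟨c, hca, hcx⟩ := hcompat a x hax hxa
  exact hdisj.subset ⟨hA c a hca haA, hB c x hcx hxB⟩

/-- In a compatible finite 2-preorder `(C; ≤₀, ≤₁)`, any two disjoint
`≤₁`-downward-closed sets are separated by a set from the Boolean algebra
generated by the `≤₀`-upward-closed sets. -/
theorem stmt10 {C : Type*} [Finite C] (le0 le1 : C → C → Prop)
    (h0refl : ∀ x, le0 x x) (h0trans : ∀ x y z, le0 x y → le0 y z → le0 x z)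
    (h1refl : ∀ x, le1 x x) (h1trans : ∀ x y z, le1 x y → le1 y z → le1 x z)
    (h2pre : ∀ x y, le1 x y → le0 x y ∧ le0 y x)
    (hcompat : ∀ a b, le0 a b → le0 b a → ∃ c, le1 c a ∧ le1 c b)
    (A B : Set C)
    (hA : ∀ x y, le1 x y → y ∈ A → x ∈ A)
    (hB : ∀ x y, le1 x y → y ∈ B → x ∈ B)
    (hdisj : A ∩ B = ∅) :
    ∃ S : Set C, BoolGen (fun U => ∀ x y, x ∈ U → le0 x y → y ∈ U) S ∧
      A ⊆ S ∧ S ∩ B = ∅ :=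
  stmt10_general le0 le1 h0refl h0trans hcompat A B hA hB hdisj
end

section
/- Let (C; ≤) be a preorder with 𝒞 the class of ≤-up sets, let Q be a preorder, A : C → Q, and let F be a finite Q-labeled forest realized as strings (F ⊆ ω⁺, ordered by prefix, labels f : F → Q). Suppose A is majorized by an F-family {U_τ}_{τ∈F} over 𝒞 (i.e., each U_τ ∈ 𝒞, U_τ ⊇ U_{τi} for τi ∈ F, ⋃_τ U_τ = C, and A(c) ≤ f(τ) whenever c ∈ Ũ_τ := U_τ \ ⋃{U_{τi} : τi ∈ F}). If T is a finite Q-labeled tree with T ≤_h (C; ≤, A) — i.e., there is a monotone φ : (T,⊑) → (C,≤) with t(τ) ≤ A(φ(τ)) for all τ ∈ T — then T ≤_h F. -/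
/-- The component `Ũ_τ = U_τ \ ⋃ { U_{τi} : τi ∈ F }` of an `F`-family. -/
def comp {C : Type*} (F : Finset (List ℕ)) (U : List ℕ → Set C) (τ : List ℕ) : Set C :=
  U τ \ ⋃ (i : ℕ) (_ : τ ++ [i] ∈ F), U (τ ++ [i])

/-!
Since `F` is finite, every `c ∈ U τ` lies in the component `Ũ_σ` of a deepest `σ ⊒ τ` with
`c ∈ U σ`. Build `ψ` down the branches of `T`: a root `s` goes to such a `σ` for `φ s` starting
from any node of the cover, and a child `s` of `p` to such a `σ` starting from `ψ p`. This is
possible because `φ p ≤ φ s` and `U (ψ p)` is an up-set. Then `φ s ∈ Ũ_{ψ s}`, so majorization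
gives `t(s) ≤ A (φ s) ≤ f (ψ s)`.
-/

section Forest

variable {α β : Type*}

def prefixFold (g : List α → β → β) (b : β) (s : List α) : β :=
  s.inits.tail.foldl (fun x p => g p x) b

theorem prefixFold_concat (g : List α → β → β) (b : β) (s : List α) (a : α) :
    prefixFold g b (s ++ [a]) = g (s ++ [a]) (prefixFold g b s) := by
  cases s <;> simp [prefixFold, List.inits_append]

theorem IsForest.prefix_mono_of_concat {T : Finset (List ℕ)} (hT : IsForest T)
    {ψ : List ℕ → List α} (hstep : ∀ s a, s ∈ T → s ++ [a] ∈ T → ψ s <+: ψ (s ++ [a])) :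
    ∀ s ∈ T, ∀ t ∈ T, s <+: t → ψ s <+: ψ t := by
  rintro s hs _ ht ⟨u, rfl⟩
  induction u using List.reverseRecOn with
  | nil => simp
  | append_singleton u a ih =>
    rw [← List.append_assoc] at ht ⊢
    have hsu : s ++ u ∈ T := hT.2 _ ht _ (List.prefix_append _ _) (by simp [hT.1 s hs])
    exact (ih hsu).trans (hstep _ _ hsu ht)

end Forest

section Deepening

variable {C : Type*} {F : Finset (List ℕ)} {U : List ℕ → Set C}

theorem exists_prefix_mem_comp {c : C} {τ : List ℕ} (hτ : τ ∈ F) (hc : c ∈ U τ) :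
    ∃ σ ∈ F, τ <+: σ ∧ c ∈ comp F U σ := by
  classical
  obtain ⟨σ, hσ, hmax⟩ := (F.filter fun σ => τ <+: σ ∧ c ∈ U σ).exists_max_image List.length
    ⟨τ, by simp [hτ, hc]⟩
  simp only [Finset.mem_filter] at hσ hmax
  refine ⟨σ, hσ.1, hσ.2.1, hσ.2.2, ?_⟩
  simp only [Set.mem_iUnion, not_exists]
  intro i hi hci
  have := hmax _ ⟨hi, hσ.2.1.trans (List.prefix_append _ _), hci⟩
  simp at this

theorem exists_deepening (hcover : (⋃ τ ∈ F, U τ) = Set.univ) :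
    ∃ deepen : C → List ℕ → List ℕ, ∀ c τ, deepen c τ ∈ F ∧ c ∈ comp F U (deepen c τ) ∧
      (τ ∈ F → c ∈ U τ → τ <+: deepen c τ) := by
  classical
  have hroot (c : C) : ∃ τ ∈ F, c ∈ U τ := by
    simpa using hcover.ge (Set.mem_univ c)
  have : ∀ c τ, ∃ σ ∈ F, c ∈ comp F U σ ∧ (τ ∈ F → c ∈ U τ → τ <+: σ) := fun c τ => by
    by_cases h : τ ∈ F ∧ c ∈ U τ
    · obtain ⟨σ, hσ, hτσ, hcσ⟩ := exists_prefix_mem_comp h.1 h.2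
      exact ⟨σ, hσ, hcσ, fun _ _ => hτσ⟩
    · obtain ⟨ρ, hρ, hcρ⟩ := hroot c
      obtain ⟨σ, hσ, -, hcσ⟩ := exists_prefix_mem_comp hρ hcρ
      exact ⟨σ, hσ, hcσ, fun hτ hc => absurd ⟨hτ, hc⟩ h⟩
  choose deepen hdeepen using this
  exact ⟨deepen, hdeepen⟩

end Deepening

theorem stmt12_general {C Q : Type*} [Preorder C] [Preorder Q] (A : C → Q)
    (F : Finset (List ℕ)) (fF : List ℕ → Q)
    (U : List ℕ → Set C)
    (hup : ∀ τ ∈ F, IsUpperSet (U τ))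
    (hcover : (⋃ τ ∈ F, U τ) = Set.univ)
    (hmaj : ∀ τ ∈ F, ∀ x ∈ comp F U τ, A x ≤ fF τ)
    (T : Finset (List ℕ)) (tT : List ℕ → Q) (hT : IsTree T)
    (φ : List ℕ → C)
    (hφmono : ∀ s ∈ T, ∀ t ∈ T, s <+: t → φ s ≤ φ t)
    (hφlab : ∀ s ∈ T, tT s ≤ A (φ s)) :
    ∃ ψ : List ℕ → List ℕ, (∀ s ∈ T, ψ s ∈ F) ∧
      (∀ s ∈ T, ∀ t ∈ T, s <+: t → ψ s <+: ψ t) ∧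
      (∀ s ∈ T, tT s ≤ fF (ψ s)) := by
  obtain ⟨deepen, hdeepen⟩ := exists_deepening hcover
  set ψ := prefixFold (fun p σ => deepen (φ p) σ) []
  have hψ_concat (s : List ℕ) (a : ℕ) : ψ (s ++ [a]) = deepen (φ (s ++ [a])) (ψ s) :=
    prefixFold_concat _ _ s a
  have hψ : ∀ s ∈ T, ψ s ∈ F ∧ φ s ∈ comp F U (ψ s) := by
    intro s hs
    obtain ⟨s, a, rfl⟩ := (List.eq_nil_or_concat' s).resolve_left (hT.1.1 s hs)
    rw [hψ_concat]
    exact ⟨(hdeepen _ _).1, (hdeepen _ _).2.1⟩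
  refine ⟨ψ, fun s hs => (hψ s hs).1, hT.1.prefix_mono_of_concat fun s a hs hsa => ?_,
    fun s hs => (hφlab s hs).trans (hmaj _ (hψ s hs).1 _ (hψ s hs).2)⟩
  have hφ_step : φ s ≤ φ (s ++ [a]) := hφmono s hs _ hsa (List.prefix_append _ _)
  rw [hψ_concat]
  exact (hdeepen _ _).2.2 (hψ s hs).1 (hup _ (hψ s hs).1 hφ_step (hψ s hs).2.1)

/-- If `A : C → Q` is majorized by an `F`-family of up-sets and `T ≤_h (C; ≤, A)` for a
finite `Q`-labeled tree `T`, then `T ≤_h F`. -/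
theorem stmt12 {C Q : Type*} [Preorder C] [Preorder Q] (A : C → Q)
    (F : Finset (List ℕ)) (fF : List ℕ → Q) (hF : IsForest F)
    (U : List ℕ → Set C)
    (hup : ∀ τ ∈ F, IsUpperSet (U τ))
    (hnest : ∀ τ ∈ F, ∀ i : ℕ, τ ++ [i] ∈ F → U (τ ++ [i]) ⊆ U τ)
    (hcover : (⋃ τ ∈ F, U τ) = Set.univ)
    (hmaj : ∀ τ ∈ F, ∀ x ∈ comp F U τ, A x ≤ fF τ)
    (T : Finset (List ℕ)) (tT : List ℕ → Q) (hT : IsTree T)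
    (φ : List ℕ → C)
    (hφmono : ∀ s ∈ T, ∀ t ∈ T, s <+: t → φ s ≤ φ t)
    (hφlab : ∀ s ∈ T, tT s ≤ A (φ s)) :
    ∃ ψ : List ℕ → List ℕ, (∀ s ∈ T, ψ s ∈ F) ∧
      (∀ s ∈ T, ∀ t ∈ T, s <+: t → ψ s <+: ψ t) ∧
      (∀ s ∈ T, tT s ≤ fF (ψ s)) :=
  stmt12_general A F fF U hup hcover hmaj T tT hT φ hφmono hφlab
end

section
/- Let (C; ≤) be a finite preorder, 𝒞 the 1-base of ≤-up subsets of C, k ≥ 2, and A : C → {0,…,k−1}. For any finite {0,…,k−1}-labeled forest F: A is determined by an F-family over 𝒞 if and only if every {0,…,k−1}-labeled tree T with T ≤_h (C; ≤, A) satisfies T ≤_h F. -/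
open Filter

namespace List

variable {α : Type*} [Preorder α]

theorem IsChain.le_getLastD {x : α} {t : List α} (h : IsChain (· ≤ ·) (x :: t)) :
    x ≤ t.getLastD x := by
  induction t generalizing x with
  | nil => exact le_rfl
  | cons a t ih =>
    rw [isChain_cons_cons] at h
    rw [getLastD_cons]
    exact h.1.trans (ih h.2)

theorem IsChain.getLastD_le_getLastD_of_prefix {x : α} {t t' : List α}
    (h : IsChain (· ≤ ·) (x :: t')) (htt' : t <+: t') : t.getLastD x ≤ t'.getLastD x := by
  induction t generalizing x t' with
  | nil => exact h.le_getLastD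
  | cons a t ih =>
    cases t' with
    | nil => exact absurd (prefix_nil.1 htt') (cons_ne_nil a t)
    | cons b t' =>
      obtain ⟨rfl, hprefix⟩ := cons_prefix_cons.1 htt'
      rw [getLastD_cons, getLastD_cons]
      exact ih (isChain_cons_cons.1 h).2 hprefix

end List

theorem eventually_imp_forall_of_antitone {p : ℕ → Prop} (hp : Antitone p) :
    ∀ᶠ M in atTop, p M → ∀ N, p N := by
  by_cases h : ∀ N, p N
  · exact Eventually.of_forall fun _ _ => h
  · obtain ⟨N, hN⟩ := not_forall.1 h
    filter_upwards [eventually_ge_atTop N] with M hM hpM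
    exact absurd (hp hM hpM) hN

theorem Finset.exists_imp_forall_of_antitone {ι : Type*} (I : Finset ι) {p : ι → ℕ → Prop}
    (hp : ∀ i, Antitone (p i)) : ∃ M, ∀ i ∈ I, p i M → ∀ N, p i N :=
  ((eventually_all_finset I).2 fun i _ => eventually_imp_forall_of_antitone (hp i)).exists

theorem IsForest.exists_prefix_hom {T : Finset (List ℕ)} (hT : IsForest T)
    {good : List ℕ → List ℕ → Prop} (hstart : ∀ s, ∃ τ, good s τ)
    (hstep : ∀ l a τ, l ∈ T → l ++ [a] ∈ T → good l τ → ∃ τ', τ <+: τ' ∧ good (l ++ [a]) τ') :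
    ∃ ψ : List ℕ → List ℕ, (∀ s ∈ T, good s (ψ s)) ∧
      ∀ s ∈ T, ∀ t ∈ T, s <+: t → ψ s <+: ψ t := by
  classical
  have hstep' (l : List ℕ) (a : ℕ) (τ : List ℕ) : ∃ τ',
      l ∈ T → l ++ [a] ∈ T → good l τ → τ <+: τ' ∧ good (l ++ [a]) τ' := by
    by_cases h : l ∈ T ∧ l ++ [a] ∈ T ∧ good l τ
    · obtain ⟨τ', h'⟩ := hstep l a τ h.1 h.2.1 h.2.2
      exact ⟨τ', fun _ _ _ => h'⟩
    · exact ⟨τ, fun h₁ h₂ h₃ => absurd ⟨h₁, h₂, h₃⟩ h⟩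
  choose start hstart using hstart
  choose step hstep using hstep'
  let ψ : List ℕ → List ℕ := fun s => s.reverseRecOn [] fun l a ψl =>
    if l ∈ T then step l a ψl else start (l ++ [a])
  have key : ∀ s ∈ T, good s (ψ s) ∧ ∀ t ∈ T, t <+: s → ψ t <+: ψ s := by
    intro s
    induction s using List.reverseRecOn with
    | nil => exact fun h => absurd rfl (hT.1 _ h)
    | append_singleton l a ih =>
      intro hs
      have hψ : ψ (l ++ [a]) = if l ∈ T then step l a (ψ l) else start (l ++ [a]) :=
        List.reverseRecOn_concat _ _ _ _
      by_cases hl : l ∈ T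
      · rw [if_pos hl] at hψ
        obtain ⟨hgood, hpre⟩ := ih hl
        obtain ⟨hext, hgood'⟩ := hstep l a (ψ l) hl hs hgood
        refine ⟨hψ ▸ hgood', fun t ht htp => ?_⟩
        rcases List.prefix_concat_iff.1 htp with rfl | htl
        · exact List.prefix_rfl
        · exact (hpre t ht htl).trans (hψ ▸ hext)
      · rw [if_neg hl] at hψ
        refine ⟨hψ ▸ hstart _, fun t ht htp => ?_⟩
        rcases List.prefix_concat_iff.1 htp with rfl | htl
        · exact List.prefix_rfl
        · refine absurd (hT.2 _ hs l (List.prefix_append _ _) ?_) hl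
          rintro rfl
          exact hT.1 t ht (List.prefix_nil.1 htl)
  exact ⟨ψ, fun s hs => (key s hs).1, fun s hs t ht hst => (key t ht).2 s hs hst⟩

section Family

variable {C : Type*} {F : Finset (List ℕ)} {U : List ℕ → Set C}

theorem exists_extension_mem_comp {τ : List ℕ} (hτ : τ ∈ F) {x : C} (hx : x ∈ U τ) :
    ∃ τ' ∈ F, τ <+: τ' ∧ x ∈ comp F U τ' := by
  classical
  obtain ⟨τ', hτ', hmax⟩ := (F.filter fun σ => τ <+: σ ∧ x ∈ U σ).exists_max_image List.length
    ⟨τ, Finset.mem_filter.2 ⟨hτ, List.prefix_rfl, hx⟩⟩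
  obtain ⟨hτ'F, hττ', hxτ'⟩ := Finset.mem_filter.1 hτ'
  refine ⟨τ', hτ'F, hττ', hxτ', ?_⟩
  simp only [Set.mem_iUnion, not_exists]
  intro i hi hxi
  have := hmax (τ' ++ [i]) (Finset.mem_filter.2 ⟨hi, hττ'.trans (List.prefix_append _ _), hxi⟩)
  simp at this

theorem exists_forest_hom_of_iUnion_eq_univ [Preorder C] (hU : ∀ τ ∈ F, IsUpperSet (U τ))
    (hcov : ⋃ τ ∈ F, U τ = Set.univ) {T : Finset (List ℕ)} (hT : IsForest T)
    {φ : List ℕ → C} (hφ : ∀ s ∈ T, ∀ t ∈ T, s <+: t → φ s ≤ φ t) :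
    ∃ ψ : List ℕ → List ℕ, (∀ s ∈ T, ψ s ∈ F) ∧ (∀ s ∈ T, ∀ t ∈ T, s <+: t → ψ s <+: ψ t) ∧
      ∀ s ∈ T, φ s ∈ comp F U (ψ s) := by
  obtain ⟨ψ, hgood, hmono⟩ := hT.exists_prefix_hom (good := fun s τ => τ ∈ F ∧ φ s ∈ comp F U τ)
    (fun s => by
      obtain ⟨τ, hτ, hx⟩ := Set.mem_iUnion₂.1 (hcov ▸ Set.mem_univ (φ s))
      obtain ⟨τ', hτ', -, hx'⟩ := exists_extension_mem_comp hτ hx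
      exact ⟨τ', hτ', hx'⟩)
    (fun l a τ hl hla ⟨hτ, hφl⟩ => by
      obtain ⟨τ', hτ', hext, hx⟩ :=
        exists_extension_mem_comp hτ (hU τ hτ (hφ l hl _ hla (List.prefix_append _ _)) hφl.1)
      exact ⟨τ', hext, hτ', hx⟩)
  exact ⟨ψ, fun s hs => (hgood s hs).1, hmono, fun s hs => (hgood s hs).2⟩

end Family

section Backward

variable {C : Type*} [Preorder C]

/-- The chain `x ≤ t₁ ≤ ⋯ ≤ tₙ` is recorded as `[t₁, …, tₙ]`, so the root of this tree is `[]`. -/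
def chainsFrom (x : C) (N : ℕ) : Set (List C) :=
  {t | List.IsChain (· ≤ ·) (x :: t) ∧ t.length ≤ N}

theorem nil_mem_chainsFrom (x : C) (N : ℕ) : [] ∈ chainsFrom x N :=
  ⟨List.isChain_singleton x, Nat.zero_le N⟩

theorem chainsFrom_mono (x : C) {N N' : ℕ} (hN : N ≤ N') : chainsFrom x N ⊆ chainsFrom x N' :=
  fun _ ht => ⟨ht.1, ht.2.trans hN⟩

theorem mem_chainsFrom_of_prefix {x : C} {N : ℕ} {t t' : List C} (ht : t ∈ chainsFrom x N)
    (ht't : t' <+: t) : t' ∈ chainsFrom x N :=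
  ⟨ht.1.prefix (List.cons_prefix_cons.2 ⟨rfl, ht't⟩), ht't.length_le.trans ht.2⟩

theorem cons_mem_chainsFrom {x y : C} (hxy : x ≤ y) {N : ℕ} {t : List C}
    (ht : t ∈ chainsFrom y N) : y :: t ∈ chainsFrom x (N + 1) :=
  ⟨List.isChain_cons_cons.2 ⟨hxy, ht.1⟩, by simpa using ht.2⟩

theorem chainsFrom_finite [Finite C] (x : C) (N : ℕ) : (chainsFrom x N).Finite :=
  (List.finite_length_le C N).subset fun _ ht => ht.2

variable {k : ℕ} (F : Finset (List ℕ)) (cF : List ℕ → Fin k) (A : C → Fin k)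

def ChainTreeHomAbove (x : C) (N : ℕ) (σ : List ℕ) : Prop :=
  ∃ ψ : List C → List ℕ, (∀ t ∈ chainsFrom x N, ψ t ∈ F) ∧
    (∀ t ∈ chainsFrom x N, ∀ t' ∈ chainsFrom x N, t <+: t' → ψ t <+: ψ t') ∧
    (∀ t ∈ chainsFrom x N, A (t.getLastD x) = cF (ψ t)) ∧ σ <+: ψ []

variable {F cF A}

theorem ChainTreeHomAbove.of_le_depth {x : C} {N N' : ℕ} (hN : N' ≤ N) {σ : List ℕ}
    (h : ChainTreeHomAbove F cF A x N σ) : ChainTreeHomAbove F cF A x N' σ := by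
  obtain ⟨ψ, hF, hmono, hlabel, hroot⟩ := h
  have hsub := chainsFrom_mono x hN
  exact ⟨ψ, fun t ht => hF t (hsub ht), fun t ht t' ht' => hmono t (hsub ht) t' (hsub ht'),
    fun t ht => hlabel t (hsub ht), hroot⟩

theorem ChainTreeHomAbove.antitone (x : C) (σ : List ℕ) :
    Antitone fun N => ChainTreeHomAbove F cF A x N σ :=
  fun _ _ hN h => h.of_le_depth hN

theorem ChainTreeHomAbove.of_prefix {x : C} {N : ℕ} {σ σ' : List ℕ} (hσ : σ' <+: σ)
    (h : ChainTreeHomAbove F cF A x N σ) : ChainTreeHomAbove F cF A x N σ' := by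
  obtain ⟨ψ, hF, hmono, hlabel, hroot⟩ := h
  exact ⟨ψ, hF, hmono, hlabel, hσ.trans hroot⟩

theorem ChainTreeHomAbove.of_le {x y : C} (hxy : x ≤ y) {N : ℕ} {σ : List ℕ}
    (h : ChainTreeHomAbove F cF A x (N + 1) σ) : ChainTreeHomAbove F cF A y N σ := by
  obtain ⟨ψ, hF, hmono, hlabel, hroot⟩ := h
  have hy := cons_mem_chainsFrom hxy (nil_mem_chainsFrom y N)
  refine ⟨fun t => ψ (y :: t), fun t ht => hF _ (cons_mem_chainsFrom hxy ht),
    fun t ht t' ht' htt' => hmono _ (cons_mem_chainsFrom hxy ht) _ (cons_mem_chainsFrom hxy ht')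
      (List.cons_prefix_cons.2 ⟨rfl, htt'⟩), fun t ht => ?_,
    hroot.trans (hmono _ (nil_mem_chainsFrom x _) _ hy List.nil_prefix)⟩
  rw [← List.getLastD_cons]
  exact hlabel _ (cons_mem_chainsFrom hxy ht)

/-- Chains from `x` are encoded as trees of strings over `ℕ` through an injection `C → ℕ`. -/
theorem exists_chainTreeHomAbove [Finite C]
    (h : ∀ (T : Finset (List ℕ)) (tT : List ℕ → Fin k), IsTree T →
      (∃ φ : List ℕ → C, (∀ s ∈ T, ∀ t ∈ T, s <+: t → φ s ≤ φ t) ∧ ∀ s ∈ T, tT s = A (φ s)) →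
      ∃ ψ : List ℕ → List ℕ, (∀ s ∈ T, ψ s ∈ F) ∧
        (∀ s ∈ T, ∀ t ∈ T, s <+: t → ψ s <+: ψ t) ∧ ∀ s ∈ T, tT s = cF (ψ s))
    (x : C) (N : ℕ) : ∃ σ ∈ F, ChainTreeHomAbove F cF A x N σ := by
  obtain ⟨e, he⟩ := exists_injective_nat C
  let enc : List C → List ℕ := fun t => (x :: t).map e
  have henc_prefix {t t' : List C} : enc t <+: enc t' ↔ t <+: t' := by
    simp [enc, List.prefix_map_iff_of_injective he]
  have henc_inj : Function.Injective enc :=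
    fun _ _ htt' => List.cons_injective (List.map_injective_iff.2 he htt')
  let T : Finset (List ℕ) := ((chainsFrom_finite x N).image enc).toFinset
  have hT (s : List ℕ) : s ∈ T ↔ ∃ t ∈ chainsFrom x N, enc t = s := by simp [T]
  have hencT {t : List C} (ht : t ∈ chainsFrom x N) : enc t ∈ T := (hT _).2 ⟨t, ht, rfl⟩
  have hTree : IsTree T := by
    refine ⟨⟨fun s hs => ?_, fun s hs u hus hu => ?_⟩, enc [], hencT (nil_mem_chainsFrom x N),
      fun s hs => ?_⟩
    · obtain ⟨t, -, rfl⟩ := (hT s).1 hs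
      simp [enc]
    · obtain ⟨t, ht, rfl⟩ := (hT _).1 hs
      obtain ⟨l, hl, rfl⟩ := List.prefix_map_iff.1 hus
      rcases List.prefix_cons_iff.1 hl with rfl | ⟨t', rfl, ht't⟩
      · exact absurd rfl hu
      · exact hencT (mem_chainsFrom_of_prefix ht ht't)
    · obtain ⟨t, -, rfl⟩ := (hT s).1 hs
      exact henc_prefix.2 List.nil_prefix
  let φ : List ℕ → C := fun s => (Function.invFun enc s).getLastD x
  have hφ (t : List C) : φ (enc t) = t.getLastD x := by
    simp only [φ, Function.leftInverse_invFun henc_inj t]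
  have hφmono : ∀ s ∈ T, ∀ s' ∈ T, s <+: s' → φ s ≤ φ s' := by
    intro s hs s' hs' hss'
    obtain ⟨t, -, rfl⟩ := (hT s).1 hs
    obtain ⟨t', ht', rfl⟩ := (hT s').1 hs'
    rw [hφ, hφ]
    exact ht'.1.getLastD_le_getLastD_of_prefix (henc_prefix.1 hss')
  obtain ⟨ψ, hψF, hψmono, hψlabel⟩ := h T (A ∘ φ) hTree ⟨φ, hφmono, fun _ _ => rfl⟩
  refine ⟨ψ (enc []), hψF _ (hencT (nil_mem_chainsFrom x N)), ψ ∘ enc,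
    fun t ht => hψF _ (hencT ht),
    fun t ht t' ht' htt' => hψmono _ (hencT ht) _ (hencT ht') (henc_prefix.2 htt'),
    fun t ht => ?_, List.prefix_rfl⟩
  rw [← hφ]
  exact hψlabel _ (hencT ht)

variable (F cF A)

def chainFamily (σ : List ℕ) : Set C :=
  {x | ∀ N, ChainTreeHomAbove F cF A x N σ}

variable {F cF A}

theorem isUpperSet_chainFamily (σ : List ℕ) : IsUpperSet (chainFamily F cF A σ) :=
  fun _ _ hxy hx N => (hx (N + 1)).of_le hxy

theorem chainFamily_anti {σ σ' : List ℕ} (hσ : σ' <+: σ) :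
    chainFamily F cF A σ ⊆ chainFamily F cF A σ' :=
  fun _ hx N => (hx N).of_prefix hσ

theorem exists_depth_mem_chainFamily (x : C) :
    ∃ M, ∀ σ ∈ F, ChainTreeHomAbove F cF A x M σ → x ∈ chainFamily F cF A σ :=
  F.exists_imp_forall_of_antitone fun σ => ChainTreeHomAbove.antitone x σ

theorem iUnion_chainFamily_eq_univ (h : ∀ x N, ∃ σ ∈ F, ChainTreeHomAbove F cF A x N σ) :
    ⋃ σ ∈ F, chainFamily F cF A σ = Set.univ := by
  refine Set.eq_univ_of_forall fun x => ?_
  obtain ⟨M, hM⟩ := exists_depth_mem_chainFamily (F := F) (cF := cF) (A := A) x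
  obtain ⟨σ, hσ, hx⟩ := h x M
  exact Set.mem_iUnion₂.2 ⟨σ, hσ, hM σ hσ hx⟩

/-- An image of the root strictly above `τ` would lie above a child of `τ`. -/
theorem apply_eq_of_mem_comp_chainFamily (hF : IsForest F) {τ : List ℕ} {x : C}
    (hx : x ∈ comp F (chainFamily F cF A) τ) : A x = cF τ := by
  obtain ⟨M, hM⟩ := exists_depth_mem_chainFamily (F := F) (cF := cF) (A := A) x
  obtain ⟨ψ, hψF, hψmono, hψlabel, ⟨rest, hrest⟩⟩ := hx.1 M
  have hroot := hψF [] (nil_mem_chainsFrom x M)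
  cases rest with
  | nil =>
    rw [List.append_nil] at hrest
    rw [hrest]
    exact hψlabel [] (nil_mem_chainsFrom x M)
  | cons i rest =>
    have hchild : τ ++ [i] <+: ψ [] := ⟨rest, by simp [← hrest]⟩
    have hchildF : τ ++ [i] ∈ F := hF.2 _ hroot _ hchild (by simp)
    refine absurd ?_ hx.2
    exact Set.mem_iUnion₂.2 ⟨i, hchildF,
      hM _ hchildF ⟨ψ, hψF, hψmono, hψlabel, hchild⟩⟩

end Backward

theorem stmt13_general {C : Type*} [Preorder C] [Finite C] {k : ℕ}
    (A : C → Fin k) (F : Finset (List ℕ)) (cF : List ℕ → Fin k) (hF : IsForest F) :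
    (∃ U : List ℕ → Set C, (∀ τ ∈ F, IsUpperSet (U τ)) ∧
        (∀ τ ∈ F, ∀ i : ℕ, τ ++ [i] ∈ F → U (τ ++ [i]) ⊆ U τ) ∧
        (⋃ τ ∈ F, U τ) = Set.univ ∧
        (∀ τ ∈ F, ∀ x ∈ comp F U τ, A x = cF τ))
    ↔ (∀ (T : Finset (List ℕ)) (tT : List ℕ → Fin k), IsTree T →
        (∃ φ : List ℕ → C, (∀ s ∈ T, ∀ t ∈ T, s <+: t → φ s ≤ φ t) ∧
            ∀ s ∈ T, tT s = A (φ s)) →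
        (∃ ψ : List ℕ → List ℕ, (∀ s ∈ T, ψ s ∈ F) ∧
            (∀ s ∈ T, ∀ t ∈ T, s <+: t → ψ s <+: ψ t) ∧
            ∀ s ∈ T, tT s = cF (ψ s))) := by
  constructor
  · rintro ⟨U, hU, -, hcov, hdet⟩ T tT hT ⟨φ, hφ, hlabel⟩
    obtain ⟨ψ, hψF, hψmono, hψcomp⟩ := exists_forest_hom_of_iUnion_eq_univ hU hcov hT.1 hφ
    exact ⟨ψ, hψF, hψmono, fun s hs => (hlabel s hs).trans (hdet _ (hψF s hs) _ (hψcomp s hs))⟩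
  · intro h
    exact ⟨chainFamily F cF A, fun σ _ => isUpperSet_chainFamily σ,
      fun τ _ i _ => chainFamily_anti (List.prefix_append τ [i]),
      iUnion_chainFamily_eq_univ (exists_chainTreeHomAbove h),
      fun τ _ x hx => apply_eq_of_mem_comp_chainFamily hF hx⟩

/-- For a finite preorder `C` and a `k`-partition `A : C → k̄`: `A` is determined by an
`F`-family of `≤`-up sets iff every `k`-labeled tree `T` with `T ≤_h (C; ≤, A)`
satisfies `T ≤_h F`. -/
theorem stmt13 {C : Type*} [Preorder C] [Finite C] {k : ℕ} (hk : 2 ≤ k)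
    (A : C → Fin k) (F : Finset (List ℕ)) (cF : List ℕ → Fin k) (hF : IsForest F) :
    (∃ U : List ℕ → Set C, (∀ τ ∈ F, IsUpperSet (U τ)) ∧
        (∀ τ ∈ F, ∀ i : ℕ, τ ++ [i] ∈ F → U (τ ++ [i]) ⊆ U τ) ∧
        (⋃ τ ∈ F, U τ) = Set.univ ∧
        (∀ τ ∈ F, ∀ x ∈ comp F U τ, A x = cF τ))
    ↔ (∀ (T : Finset (List ℕ)) (tT : List ℕ → Fin k), IsTree T →
        (∃ φ : List ℕ → C, (∀ s ∈ T, ∀ t ∈ T, s <+: t → φ s ≤ φ t) ∧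
            ∀ s ∈ T, tT s = A (φ s)) →
        (∃ ψ : List ℕ → List ℕ, (∀ s ∈ T, ψ s ∈ F) ∧
            (∀ s ∈ T, ∀ t ∈ T, s <+: t → ψ s <+: ψ t) ∧
            ∀ s ∈ T, tT s = cF (ψ s))) :=
  stmt13_general A F cF hF
end

section
/- For a finite automaton ℳ with state set Q, transition function extended to words, define on the set C_ℳ of cycles (sets of states occurring infinitely often on some infinite run from the initial state) the relations: c ≤₀ d iff some state of d is reachable from some state of c, and c ≤₁ d iff c ⊇ d. Then (C_ℳ; ≤₀, ≤₁) is a compatible 2-preorder: ≤₀ and ≤₁ are preorders, c ≤₁ d implies c ≡₀ d, and c ≡₀ d implies there is e ∈ C_ℳ with e ≤₁ c and e ≤₁ d. -/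
/-! Cycles are nonempty by pigeonhole on the run, and any two states of a cycle are mutually
reachable, since each occurs after the other. Hence `≤₀` is transitive, and if `c ≡₀ d` then every
state of `c ∪ d` is mutually reachable with a fixed `q ∈ c`. A loop at `q` through all of these
states, repeated forever after a word leading from the initial state to `q`, yields a run whose
cycle contains `c ∪ d`. -/

/-- The run of an automaton `(Q, δ, init)` on an infinite word `ξ`. -/
def run {X Q : Type*} (δ : Q → X → Q) (init : Q) (ξ : ℕ → X) : ℕ → Q :=
  fun n => Nat.rec init (fun m q => δ q (ξ m)) n

/-- The set of states occurring infinitely often in the run on `ξ`. -/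
def infOcc {X Q : Type*} (δ : Q → X → Q) (init : Q) (ξ : ℕ → X) : Set Q :=
  {q | ∀ N : ℕ, ∃ n : ℕ, N ≤ n ∧ run δ init ξ n = q}

/-- The set of cycles of the automaton. -/
def cycles {X Q : Type*} (δ : Q → X → Q) (init : Q) : Set (Set Q) :=
  {c | ∃ ξ : ℕ → X, infOcc δ init ξ = c}

/-- Reachability of state `r` from state `q`. -/
def reach {X Q : Type*} (δ : Q → X → Q) (q r : Q) : Prop :=
  ∃ w : List X, w.foldl δ q = r

/-- `c ≤₀ d`: some state of `d` is reachable from some state of `c`. -/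
def cle0 {X Q : Type*} (δ : Q → X → Q) (c d : Set Q) : Prop :=
  ∃ q ∈ c, ∃ r ∈ d, reach δ q r

/-- `c ≤₁ d` iff `c ⊇ d`. -/
def cle1 {Q : Type*} (c d : Set Q) : Prop := d ⊆ c

section Automaton

variable {X Q : Type*} {δ : Q → X → Q}

theorem reach_refl (q : Q) : reach δ q q := ⟨[], rfl⟩

theorem reach.trans {q r s : Q} : reach δ q r → reach δ r s → reach δ q s
  | ⟨v, hv⟩, ⟨w, hw⟩ => ⟨v ++ w, by rw [List.foldl_append, hv, hw]⟩

theorem run_eq_foldl_take (s : Q) (ξ : Stream' X) (n : ℕ) :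
    run δ s ξ n = (ξ.take n).foldl δ s := by
  induction n with
  | zero => rfl
  | succ n ih => rw [Stream'.take_succ', List.foldl_append, ← ih]; rfl

theorem run_append_stream (s : Q) (w : List X) (ξ : Stream' X) (k : ℕ) :
    run δ s (w ++ₛ ξ) (w.length + k) = run δ (w.foldl δ s) ξ k := by
  rw [run_eq_foldl_take, run_eq_foldl_take, ← Stream'.append_take, List.foldl_append]

theorem foldl_take_drop_run (s : Q) (ξ : Stream' X) (n k : ℕ) :
    ((ξ.drop n).take k).foldl δ (run δ s ξ n) = run δ s ξ (n + k) := by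
  rw [run_eq_foldl_take, run_eq_foldl_take, Stream'.take_add, List.foldl_append]

theorem reach_run_of_le (s : Q) (ξ : Stream' X) {n m : ℕ} (h : n ≤ m) :
    reach δ (run δ s ξ n) (run δ s ξ m) :=
  ⟨_, by rw [foldl_take_drop_run, Nat.add_sub_cancel' h]⟩

theorem run_cycle_mul_length_add {q : Q} {v : List X} (hv : v ≠ []) (hloop : v.foldl δ q = q)
    (N k : ℕ) :
    run δ q (Stream'.cycle v hv) (N * v.length + k) = run δ q (Stream'.cycle v hv) k := by
  induction N with
  | zero => simp
  | succ N ih =>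
    rw [Nat.succ_mul, Nat.add_comm _ v.length, Nat.add_assoc, Stream'.cycle_eq,
      run_append_stream, hloop, ← Stream'.cycle_eq, ih]

theorem run_cycle_length_of_prefix (q : Q) {v v₁ : List X} (hv : v ≠ []) (h : v₁ <+: v) :
    run δ q (Stream'.cycle v hv) v₁.length = v₁.foldl δ q := by
  rw [run_eq_foldl_take, Stream'.cycle_eq, Stream'.take_append_of_le_length _ _ _ h.length_le,
    ← List.prefix_iff_eq_take.mp h]

theorem run_cycle_mem_infOcc {init q : Q} {u v : List X} (hu : u.foldl δ init = q) (hv : v ≠ [])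
    (hloop : v.foldl δ q = q) (k : ℕ) :
    run δ q (Stream'.cycle v hv) k ∈ infOcc δ init (u ++ₛ Stream'.cycle v hv) := by
  intro N
  have hN : N ≤ N * v.length := Nat.le_mul_of_pos_right N (List.length_pos_iff.mpr hv)
  refine ⟨u.length + (N * v.length + k), by omega, ?_⟩
  rw [run_append_stream, hu, run_cycle_mul_length_add hv hloop]

theorem exists_loop_visiting {q : Q} {v₀ : List X} (hv₀ : v₀ ≠ []) (hloop₀ : v₀.foldl δ q = q)
    {S : Set Q} (hS : S.Finite) (hreach : ∀ s ∈ S, reach δ q s ∧ reach δ s q) :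
    ∃ v ≠ [], v.foldl δ q = q ∧ ∀ s ∈ S, ∃ v₁, v₁ <+: v ∧ v₁.foldl δ q = s := by
  induction S, hS using Set.Finite.induction_on with
  | empty => exact ⟨v₀, hv₀, hloop₀, by simp⟩
  | @insert s S _ _ ih =>
    obtain ⟨⟨w₁, hw₁⟩, ⟨w₂, hw₂⟩⟩ := hreach s (Set.mem_insert s S)
    obtain ⟨v, hv, hloop, hvisit⟩ := ih fun t ht => hreach t (Set.mem_insert_of_mem s ht)
    refine ⟨w₁ ++ w₂ ++ v, by simp [hv], by simp [hw₁, hw₂, hloop], ?_⟩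
    rintro t (rfl | ht)
    · exact ⟨w₁, by simp [List.append_assoc], hw₁⟩
    · obtain ⟨v₁, hv₁, rfl⟩ := hvisit t ht
      exact ⟨w₁ ++ w₂ ++ v₁, List.prefix_append_right_inj _ |>.mpr hv₁, by simp [hw₁, hw₂]⟩

theorem exists_infOcc_superset {init q : Q} (hq : reach δ init q) {v₀ : List X} (hv₀ : v₀ ≠ [])
    (hloop₀ : v₀.foldl δ q = q) {S : Set Q} (hS : S.Finite)
    (hreach : ∀ s ∈ S, reach δ q s ∧ reach δ s q) : ∃ ξ, S ⊆ infOcc δ init ξ := by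
  obtain ⟨u, hu⟩ := hq
  obtain ⟨v, hv, hloop, hvisit⟩ := exists_loop_visiting hv₀ hloop₀ hS hreach
  refine ⟨u ++ₛ Stream'.cycle v hv, fun s hs => ?_⟩
  obtain ⟨v₁, hv₁, rfl⟩ := hvisit s hs
  rw [← run_cycle_length_of_prefix q hv hv₁]
  exact run_cycle_mem_infOcc hu hv hloop _

section cycles

variable {init : Q} {c d : Set Q}

theorem nonempty_of_mem_cycles [Finite Q] (hc : c ∈ cycles δ init) : c.Nonempty := by
  obtain ⟨ξ, rfl⟩ := hc
  obtain ⟨q, hq⟩ := Finite.exists_infinite_fiber (run δ init ξ)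
  refine ⟨q, fun N => ?_⟩
  obtain ⟨n, hn, hNn⟩ := (Set.infinite_coe_iff.mp hq).exists_gt N
  exact ⟨n, hNn.le, hn⟩

theorem reach_of_mem_cycles (hc : c ∈ cycles δ init) {q r : Q} (hq : q ∈ c) (hr : r ∈ c) :
    reach δ q r := by
  obtain ⟨ξ, rfl⟩ := hc
  obtain ⟨n, -, rfl⟩ := hq 0
  obtain ⟨m, hnm, rfl⟩ := hr n
  exact reach_run_of_le init ξ hnm

theorem reach_init_of_mem_cycles (hc : c ∈ cycles δ init) {q : Q} (hq : q ∈ c) :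
    reach δ init q := by
  obtain ⟨ξ, rfl⟩ := hc
  obtain ⟨n, -, rfl⟩ := hq 0
  exact reach_run_of_le init ξ n.zero_le

theorem exists_loop_of_mem_cycles (hc : c ∈ cycles δ init) {q : Q} (hq : q ∈ c) :
    ∃ v : List X, v ≠ [] ∧ v.foldl δ q = q := by
  obtain ⟨ξ, rfl⟩ := hc
  obtain ⟨n, -, rfl⟩ := hq 0
  obtain ⟨m, hnm, hm⟩ := hq (n + 1)
  refine ⟨(Stream'.drop n ξ).take (m - n), ?_, ?_⟩
  · rw [← List.length_pos_iff, Stream'.length_take]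
    omega
  · rw [foldl_take_drop_run init ξ, Nat.add_sub_cancel' (by omega), hm]

theorem reach_of_cle0 (hc : c ∈ cycles δ init) (hd : d ∈ cycles δ init) (h : cle0 δ c d)
    {q r : Q} (hq : q ∈ c) (hr : r ∈ d) : reach δ q r := by
  obtain ⟨q', hq', r', hr', h⟩ := h
  exact ((reach_of_mem_cycles hc hq hq').trans h).trans (reach_of_mem_cycles hd hr' hr)

theorem exists_mem_cycles_union_subset [Finite Q] (hc : c ∈ cycles δ init)
    (hd : d ∈ cycles δ init) (hcd : cle0 δ c d) (hdc : cle0 δ d c) :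
    ∃ e ∈ cycles δ init, c ∪ d ⊆ e := by
  obtain ⟨q, hq⟩ := nonempty_of_mem_cycles hc
  obtain ⟨v₀, hv₀, hloop₀⟩ := exists_loop_of_mem_cycles hc hq
  have hreach : ∀ s ∈ c ∪ d, reach δ q s ∧ reach δ s q := by
    rintro s (hs | hs)
    · exact ⟨reach_of_mem_cycles hc hq hs, reach_of_mem_cycles hc hs hq⟩
    · exact ⟨reach_of_cle0 hc hd hcd hq hs, reach_of_cle0 hd hc hdc hs hq⟩
  obtain ⟨ξ, hξ⟩ := exists_infOcc_superset (reach_init_of_mem_cycles hc hq) hv₀ hloop₀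
    (Set.toFinite _) hreach
  exact ⟨_, ⟨ξ, rfl⟩, hξ⟩

end cycles

end Automaton

/-- On the cycles of a finite automaton, `(C_ℳ; ≤₀, ≤₁)` is a compatible 2-preorder:
both relations are preorders, `≤₁` refines `≡₀`, and `≡₀`-equivalent cycles have a
common `≤₁`-lower bound in `C_ℳ`. -/
theorem stmt14 {X Q : Type*} [Finite Q] (δ : Q → X → Q) (init : Q) :
    (∀ c ∈ cycles δ init, cle0 δ c c) ∧
    (∀ c ∈ cycles δ init, ∀ d ∈ cycles δ init, ∀ e ∈ cycles δ init,
        cle0 δ c d → cle0 δ d e → cle0 δ c e) ∧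
    (∀ c ∈ cycles δ init, cle1 c c) ∧
    (∀ c ∈ cycles δ init, ∀ d ∈ cycles δ init, ∀ e ∈ cycles δ init,
        cle1 c d → cle1 d e → cle1 c e) ∧
    (∀ c ∈ cycles δ init, ∀ d ∈ cycles δ init,
        cle1 c d → cle0 δ c d ∧ cle0 δ d c) ∧
    (∀ c ∈ cycles δ init, ∀ d ∈ cycles δ init, cle0 δ c d → cle0 δ d c →
        ∃ e ∈ cycles δ init, cle1 e c ∧ cle1 e d) := by
  refine ⟨fun c hc => ?_, fun c hc d hd e he hcd hde => ?_, fun c _ => subset_rfl,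
    fun c _ d _ e _ hcd hde => hde.trans hcd, fun c hc d hd hdc => ?_,
    fun c hc d hd hcd hdc => ?_⟩
  · obtain ⟨q, hq⟩ := nonempty_of_mem_cycles hc
    exact ⟨q, hq, q, hq, reach_refl q⟩
  · obtain ⟨q, hq, -⟩ := id hcd
    obtain ⟨r, hr, s, hs, -⟩ := id hde
    exact ⟨q, hq, s, hs, (reach_of_cle0 hc hd hcd hq hr).trans (reach_of_cle0 hd he hde hr hs)⟩
  · obtain ⟨r, hr⟩ := nonempty_of_mem_cycles hd
    exact ⟨⟨r, hdc hr, r, hr, reach_refl r⟩, ⟨r, hr, r, hdc hr, reach_refl r⟩⟩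
  · obtain ⟨e, he, hcde⟩ := exists_mem_cycles_union_subset hc hd hcd hdc
    exact ⟨e, he, Set.subset_union_left.trans hcde, Set.subset_union_right.trans hcde⟩
end
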